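/- arXiv:2003.13603 — 3 statements merged into one kernel-verified Lean document; each statement's English description precedes it below -/
import Mathlib

section
/- Σ_{m≥0} A_m/(2mn+1) = √π · Γ(1 + 1/(2n)) / Γ(1/2 + 1/(2n)) = K_n, and Σ_{m≥0} A_m(n−1)/(n(2m+1)−1) = √π · Γ(3/2 − 1/(2n)) / Γ(1 − 1/(2n)) = (n−1)·tan(π/(2n))·K_n. In other words, H_n(1) = K_n and G_n(1) = (n−1) tan(π/(2n)) K_n. -/
open Real

noncomputable def A (m : ℕ) : ℝ := (Nat.centralBinom m : ℝ) / 4 ^ m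

noncomputable def c (n m : ℕ) : ℝ := A m / (2 * m * n + 1)

noncomputable def d (n m : ℕ) : ℝ := A m * ((n : ℝ) - 1) / ((n : ℝ) * (2 * m + 1) - 1)

noncomputable def H (n : ℕ) (z : ℂ) : ℂ := ∑' m : ℕ, (c n m : ℂ) * z ^ m

noncomputable def G (n : ℕ) (z : ℂ) : ℂ := ∑' m : ℕ, (d n m : ℂ) * z ^ m

noncomputable def hh (n : ℕ) (z : ℂ) : ℂ := ∑' m : ℕ, (c n m : ℂ) * z ^ (2 * m * n + 1)

noncomputable def gg (n : ℕ) (z : ℂ) : ℂ :=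
  (1 / ((n : ℂ) - 1)) * ∑' m : ℕ, (d n m : ℂ) * z ^ (2 * m * n + n - 1)

noncomputable def f (n : ℕ) (β : ℝ) (z : ℂ) : ℂ :=
  Complex.exp (Complex.I * β / 2) * hh n z +
    Complex.exp (-(Complex.I * β / 2)) * (starRingEnd ℂ) (gg n z)

noncomputable def K (n : ℕ) : ℝ :=
  Real.sqrt π * Real.Gamma (1 + 1 / (2 * n)) / Real.Gamma (1 / 2 + 1 / (2 * n))

/-!
The binomial series gives `∑ A m * y ^ m = (1 - y) ^ (-1/2)`, so integrating termwise against
`y ^ (a - 1)` over `(0, 1)` yields `∑ A m / (m + a) = B(a, 1/2) = √π Γ(a) / Γ(a + 1/2)` for all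
`a > 0`. Both series have the form `∑ a * A m / (m + a)`, with `a = 1/(2n)` and `a = 1/2 - 1/(2n)`;
the tangent factor relating them comes from the reflection formulas for `Γ(x) Γ(1 - x)` and
`Γ(1/2 + x) Γ(1/2 - x)`.
-/

open MeasureTheory Set

theorem A_succ (m : ℕ) : (2 * m + 2 : ℝ) * A (m + 1) = (2 * m + 1) * A m := by
  have h : ((m + 1 : ℕ) : ℝ) * (m + 1).centralBinom = 2 * (2 * m + 1) * m.centralBinom := by
    exact_mod_cast Nat.succ_mul_centralBinom_succ m
  simp only [A, pow_succ]
  field_simp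
  push_cast at h
  linear_combination 2 * h

theorem A_eq_choose (m : ℕ) : A m = Ring.choose ((1 / 2 : ℝ) + m - 1) m := by
  have hpoch : ∀ m : ℕ, (m.factorial : ℝ) * A m = (ascPochhammer ℝ m).eval (1 / 2) := by
    intro m
    induction m with
    | zero => simp [A]
    | succ k ih =>
      rw [ascPochhammer_succ_eval, ← ih, Nat.factorial_succ]
      push_cast
      linear_combination (k.factorial : ℝ) / 2 * A_succ k
  rw [← Ring.multichoose_eq, ← mul_right_inj' (Nat.cast_ne_zero.2 m.factorial_ne_zero), hpoch,
    ← nsmul_eq_mul, Ring.factorial_nsmul_multichoose_eq_ascPochhammer,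
    Polynomial.ascPochhammer_smeval_eq_eval]

theorem hasSum_A_mul_pow {y : ℝ} (hy : |y| < 1) :
    HasSum (fun m => A m * y ^ m) ((1 - y) ^ (-(1 / 2) : ℝ)) := by
  have h := (Real.one_div_one_sub_rpow_hasFPowerSeriesOnBall_zero (1 / 2)).hasSum
    (y := y) (by simpa [enorm_eq_nnnorm, ← NNReal.coe_lt_coe] using hy)
  simpa [FormalMultilinearSeries.ofScalars_apply_eq, A_eq_choose, Real.rpow_neg,
    sub_nonneg.2 (abs_lt.1 hy).2.le, mul_comm] using h

theorem setIntegral_rpow_mul_one_sub_rpow {α β : ℝ} (hα : 0 < α) (hβ : 0 < β) :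
    ∫ x in Ioo (0 : ℝ) 1, x ^ (α - 1) * (1 - x) ^ (β - 1) = ProbabilityTheory.beta α β := by
  rw [ProbabilityTheory.beta_eq_betaIntegralReal α β hα hβ, Complex.betaIntegral,
    intervalIntegral.integral_of_le zero_le_one, ← integral_Ioc_eq_integral_Ioo,
    ← RCLike.re_to_complex, ← integral_re]
  · refine setIntegral_congr_fun measurableSet_Ioc fun x ⟨hx0, hx1⟩ ↦ ?_
    norm_cast
    rw [← Complex.ofReal_cpow hx0.le, ← Complex.ofReal_cpow (sub_nonneg.2 hx1),
      RCLike.re_to_complex, Complex.re_mul_ofReal, Complex.ofReal_re]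
  · have := Complex.betaIntegral_convergent (u := α) (v := β) (by simpa) (by simpa)
    rwa [intervalIntegrable_iff_integrableOn_Ioc_of_le zero_le_one] at this

theorem setIntegral_Ioo_rpow_sub_one {r : ℝ} (hr : 0 < r) :
    ∫ x in Ioo (0 : ℝ) 1, x ^ (r - 1) = 1 / r := by
  rw [← integral_Ioc_eq_integral_Ioo, ← intervalIntegral.integral_of_le zero_le_one,
    integral_rpow (Or.inl (by linarith))]
  simp [Real.zero_rpow hr.ne']

theorem hasSum_A_div_add {a : ℝ} (ha : 0 < a) :
    HasSum (fun m : ℕ => A m / (m + a)) (ProbabilityTheory.beta a (1 / 2)) := by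
  set F : ℕ → ℝ → ℝ := fun m x => A m * x ^ ((m : ℝ) + a - 1)
  have hF_int (m : ℕ) : ∫ x in Ioo (0 : ℝ) 1, F m x = A m / (m + a) := by
    rw [integral_const_mul, add_sub_assoc, ← add_sub_assoc,
      setIntegral_Ioo_rpow_sub_one (by positivity)]
    ring
  have hF_sum : ∀ x ∈ Ioo (0 : ℝ) 1,
      HasSum (fun m => F m x) (x ^ (a - 1) * (1 - x) ^ ((1 / 2 : ℝ) - 1)) := by
    rintro x ⟨hx0, hx1⟩
    have h := (hasSum_A_mul_pow (y := x) (by rw [abs_lt]; constructor <;> linarith)).mul_right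
      (x ^ (a - 1))
    have hF : (fun m => F m x) = fun m => A m * x ^ m * x ^ (a - 1) := by
      funext m
      simp only [F, add_sub_assoc, Real.rpow_add hx0, Real.rpow_natCast, mul_assoc]
    rwa [hF, mul_comm, show (1 / 2 : ℝ) - 1 = -(1 / 2) by norm_num]
  have hF_nonneg (m : ℕ) : ∀ x ∈ Ioo (0 : ℝ) 1, 0 ≤ F m x := fun x hx =>
    mul_nonneg (by unfold A; positivity) (Real.rpow_nonneg hx.1.le _)
  -- The terms are nonnegative, hence their own dominating bound; the bound's sum, the Beta
  -- integrand, is integrable because its integral `B(a, 1/2)` is nonzero.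
  have hlim := hasSum_integral_of_dominated_convergence (μ := volume.restrict (Ioo (0 : ℝ) 1)) F
    (fun m => by fun_prop)
    (fun m => ae_restrict_of_forall_mem measurableSet_Ioo fun x hx => by
      rw [Real.norm_of_nonneg (hF_nonneg m x hx)])
    (ae_restrict_of_forall_mem measurableSet_Ioo fun x hx => (hF_sum x hx).summable)
    ?_ (ae_restrict_of_forall_mem measurableSet_Ioo hF_sum)
  · simpa only [hF_int, setIntegral_rpow_mul_one_sub_rpow ha one_half_pos] using hlim
  · refine (Integrable.of_integral_ne_zero ?_).congr
      (ae_restrict_of_forall_mem measurableSet_Ioo fun x hx => (hF_sum x hx).tsum_eq.symm)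
    rw [setIntegral_rpow_mul_one_sub_rpow ha one_half_pos]
    exact (ProbabilityTheory.beta_pos ha one_half_pos).ne'

theorem hasSum_mul_A_div_add {a : ℝ} (ha : 0 < a) :
    HasSum (fun m : ℕ => a * A m / (m + a)) (√π * Gamma (a + 1) / Gamma (a + 1 / 2)) := by
  have hbeta :
      a * ProbabilityTheory.beta a (1 / 2) = √π * Gamma (a + 1) / Gamma (a + 1 / 2) := by
    rw [ProbabilityTheory.beta, Gamma_one_half_eq, Gamma_add_one ha.ne']
    ring
  simpa only [hbeta, mul_div_assoc] using (hasSum_A_div_add ha).mul_left a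

theorem Gamma_three_halves_sub_div_Gamma_one_sub {x : ℝ} (hx0 : 0 < x) (hx1 : x < 1 / 2) :
    Gamma (3 / 2 - x) / Gamma (1 - x)
      = (1 / 2 - x) / x * tan (π * x) * (Gamma (1 + x) / Gamma (1 / 2 + x)) := by
  have hsin : 0 < sin (π * x) := sin_pos_of_pos_of_lt_pi (by positivity) (by nlinarith [pi_pos])
  have hcos : 0 < cos (π * x) :=
    cos_pos_of_mem_Ioo ⟨by nlinarith [pi_pos], by nlinarith [pi_pos]⟩
  have hrefl : Gamma x * Gamma (1 - x) = π / sin (π * x) := Gamma_mul_Gamma_one_sub x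
  have hrefl_half : Gamma (1 / 2 + x) * Gamma (1 / 2 - x) = π / cos (π * x) := by
    rw [← sin_add_pi_div_two, show π * x + π / 2 = π * (1 / 2 + x) by ring,
      ← Gamma_mul_Gamma_one_sub]
    ring_nf
  have hGx := Gamma_pos_of_pos hx0
  have hGhalf := Gamma_pos_of_pos (show 0 < 1 / 2 + x by linarith)
  have h1 : Gamma (1 / 2 - x) = π / cos (π * x) / Gamma (1 / 2 + x) := by
    rw [← hrefl_half]; field_simp
  have h2 : Gamma (1 - x) = π / sin (π * x) / Gamma x := by
    rw [← hrefl]; field_simp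
  rw [show 3 / 2 - x = (1 / 2 - x) + 1 by ring, Gamma_add_one (by linarith), add_comm 1 x,
    Gamma_add_one hx0.ne', tan_eq_sin_div_cos, h1, h2]
  field_simp

theorem stmt_2 (n : ℕ) (hn : 3 ≤ n) :
    (∑' m : ℕ, c n m) = Real.sqrt π * Real.Gamma (1 + 1 / (2 * n)) / Real.Gamma (1 / 2 + 1 / (2 * n)) ∧
    (∑' m : ℕ, c n m) = K n ∧
    (∑' m : ℕ, d n m) = Real.sqrt π * Real.Gamma (3 / 2 - 1 / (2 * n)) / Real.Gamma (1 - 1 / (2 * n)) ∧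
    (∑' m : ℕ, d n m) = ((n : ℝ) - 1) * Real.tan (π / (2 * n)) * K n := by
  have hn3 : (3 : ℝ) ≤ n := by exact_mod_cast hn
  set x : ℝ := 1 / (2 * n) with hx
  have hx0 : 0 < x := by positivity
  have hx1 : x < 1 / 2 := by rw [hx, div_lt_div_iff₀] <;> linarith
  have hc : HasSum (c n) (√π * Gamma (1 + x) / Gamma (1 / 2 + x)) := by
    convert hasSum_mul_A_div_add hx0 using 2 with m
    · simp only [c, hx]
      field_simp
    all_goals ring_nf
  have hd : HasSum (d n) (√π * Gamma (3 / 2 - x) / Gamma (1 - x)) := by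
    convert hasSum_mul_A_div_add (a := 1 / 2 - x) (by linarith) using 2 with m
    · simp only [d, hx]
      field_simp
      ring
    all_goals ring_nf
  refine ⟨hc.tsum_eq, hc.tsum_eq, hd.tsum_eq, ?_⟩
  rw [hd.tsum_eq, mul_div_assoc, Gamma_three_halves_sub_div_Gamma_one_sub hx0 hx1, K]
  rw [show (1 / 2 - x) / x = n - 1 by rw [hx]; field_simp,
    show π * x = π / (2 * n) by rw [hx]; ring]
  ring
end

section
/- For every β ∈ ℝ and every complex z with |z| ≤ 1: (i) f_β(z) = e^{−i(π/2 + π/n)} · f_{β+π}(e^{iπ/n} z), so the image f_{β+π}(U) is a rotation of f_β(U); and (ii) f_β(conj z) = conj(f_{−β}(z)). -/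
open Real

open Complex ComplexConjugate

/-
Both series have real coefficients, so they commute with complex conjugation, which gives (ii).
For (i) let ζ = e^{iπ/n}, so ζ^n = -1. The exponents 2mn + 1 and 2mn + n - 1 are ≡ 1 and ≡ n - 1
modulo 2n, hence h(ζz) = ζ h(z) and g(ζz) = ζ^{n-1} g(z) = -ζ⁻¹ g(z). Shifting β by π multiplies
the phases e^{±iβ/2} by ±i, and since conj(-ζ⁻¹) = -ζ both terms pick up the same factor iζ:
f_{β+π}(ζz) = iζ f_β(z). As |ζ| = 1, z ↦ ζz maps the unit disc onto itself.
-/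

lemma tsum_ofReal_mul_conj_pow (a : ℕ → ℝ) (e : ℕ → ℕ) (z : ℂ) :
    ∑' m, (a m : ℂ) * conj z ^ e m = conj (∑' m, (a m : ℂ) * z ^ e m) := by
  rw [conj_tsum]
  simp only [map_mul, map_pow, conj_ofReal]

lemma tsum_mul_mul_pow_of_pow_eq (a : ℕ → ℂ) (e : ℕ → ℕ) {ζ w : ℂ} (h : ∀ m, ζ ^ e m = w)
    (z : ℂ) : ∑' m, a m * (ζ * z) ^ e m = w * ∑' m, a m * z ^ e m := by
  rw [← tsum_mul_left]
  exact tsum_congr fun m => by rw [mul_pow, h]; ring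

lemma hh_conj (n : ℕ) (z : ℂ) : hh n (conj z) = conj (hh n z) :=
  tsum_ofReal_mul_conj_pow _ _ z

lemma gg_conj (n : ℕ) (z : ℂ) : gg n (conj z) = conj (gg n z) := by
  rw [gg, gg, tsum_ofReal_mul_conj_pow, map_mul]
  congr 1
  simp

lemma f_conj (n : ℕ) (β : ℝ) (z : ℂ) : f n β (conj z) = conj (f n (-β) z) := by
  have hphase : conj (I * ↑(-β) / 2) = I * β / 2 := by
    rw [map_div₀, map_mul, conj_I, conj_ofReal, map_ofNat]; push_cast; ring
  rw [f, f, hh_conj, gg_conj, map_add, map_mul, map_mul, conj_conj, ← exp_conj, ← exp_conj,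
    map_neg, hphase]

section RootOfMinusOne

variable {n : ℕ} {ζ : ℂ}

lemma norm_eq_one_of_pow_eq_neg_one (hζ : ζ ^ n = -1) : ‖ζ‖ = 1 := by
  have hn : n ≠ 0 := by rintro rfl; norm_num at hζ
  exact norm_eq_one_of_pow_eq_one (n := 2 * n) (by rw [pow_mul', hζ, neg_one_sq]) (by positivity)

lemma hh_mul_of_pow_eq_neg_one (hζ : ζ ^ n = -1) (z : ℂ) : hh n (ζ * z) = ζ * hh n z :=
  tsum_mul_mul_pow_of_pow_eq _ _ (fun m => by
    rw [pow_succ, mul_comm (2 * m) n, pow_mul, hζ, (even_two_mul m).neg_one_pow, one_mul]) z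

lemma gg_mul_of_pow_eq_neg_one (hζ : ζ ^ n = -1) (z : ℂ) : gg n (ζ * z) = -ζ⁻¹ * gg n z := by
  have hn : n ≠ 0 := by rintro rfl; norm_num at hζ
  have hζ0 : ζ ≠ 0 := by rintro rfl; simp [zero_pow hn] at hζ
  have hpow (m : ℕ) : ζ ^ (2 * m * n + n - 1) = -ζ⁻¹ := by
    have hexp : 2 * m * n + n - 1 + 1 = n * (2 * m + 1) := by
      rw [Nat.sub_add_cancel (by omega)]; ring
    have : ζ ^ (2 * m * n + n - 1) * ζ = -1 := by
      rw [← pow_succ, hexp, pow_mul, hζ, Odd.neg_one_pow (odd_two_mul_add_one m)]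
    rw [eq_div_of_mul_eq hζ0 this, neg_div, one_div]
  rw [gg, gg, tsum_mul_mul_pow_of_pow_eq _ _ hpow]
  ring

lemma f_add_pi_mul_of_pow_eq_neg_one (hζ : ζ ^ n = -1) (β : ℝ) (z : ℂ) :
    f n (β + π) (ζ * z) = I * ζ * f n β z := by
  have hphase : exp (I * ↑(β + π) / 2) = exp (I * β / 2) * I := by
    rw [show I * ↑(β + π) / 2 = I * β / 2 + π / 2 * I by push_cast; ring, Complex.exp_add,
      exp_pi_div_two_mul_I]
  have hphase' : exp (-(I * ↑(β + π) / 2)) = exp (-(I * β / 2)) * -I := by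
    rw [Complex.exp_neg, hphase, mul_inv, inv_I, ← Complex.exp_neg]
  have hconj : conj (-ζ⁻¹) = -ζ := by
    rw [map_neg, inv_eq_conj (norm_eq_one_of_pow_eq_neg_one hζ), conj_conj]
  rw [f, f, hh_mul_of_pow_eq_neg_one hζ, gg_mul_of_pow_eq_neg_one hζ, map_mul, hconj,
    hphase, hphase']
  ring

end RootOfMinusOne

lemma exp_I_mul_pi_div_natCast_pow (n : ℕ) (hn : n ≠ 0) :
    exp (I * ((π / n : ℝ) : ℂ)) ^ n = -1 := by
  rw [← Complex.exp_nat_mul, ← exp_pi_mul_I]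
  congr 1
  push_cast
  field_simp

lemma image_mul_ball_zero_of_norm_eq_one {𝕜 : Type*} [NormedField 𝕜] {ζ : 𝕜} (hζ : ‖ζ‖ = 1)
    (r : ℝ) : (ζ * ·) '' Metric.ball (0 : 𝕜) r = Metric.ball 0 r := by
  have hζ0 : ζ ≠ 0 := by rintro rfl; simp at hζ
  have hball := smul_ball hζ0 (0 : 𝕜) r
  rw [smul_zero, hζ, one_mul, ← Set.image_smul] at hball
  simpa only [smul_eq_mul] using hball

theorem stmt_7 (n : ℕ) (hn : 3 ≤ n) (β : ℝ) :
    (∀ z : ℂ, ‖z‖ ≤ 1 →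
      f n β z = Complex.exp (-(Complex.I * ((π / 2 + π / n : ℝ) : ℂ))) *
          f n (β + π) (Complex.exp (Complex.I * ((π / n : ℝ) : ℂ)) * z) ∧
      f n β ((starRingEnd ℂ) z) = (starRingEnd ℂ) (f n (-β) z)) ∧
    f n (β + π) '' Metric.ball 0 1
      = (fun w => Complex.exp (Complex.I * ((π / 2 + π / n : ℝ) : ℂ)) * w) ''
          (f n β '' Metric.ball 0 1) := by
  set ζ := exp (I * ((π / n : ℝ) : ℂ))
  have hζ : ζ ^ n = -1 := exp_I_mul_pi_div_natCast_pow n (by omega)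
  have hrot : exp (I * ((π / 2 + π / n : ℝ) : ℂ)) = I * ζ := by
    rw [show I * ((π / 2 + π / n : ℝ) : ℂ) = π / 2 * I + I * ((π / n : ℝ) : ℂ) by push_cast; ring,
      Complex.exp_add, exp_pi_div_two_mul_I]
  have hIζ : I * ζ ≠ 0 := by rw [← hrot]; exact exp_ne_zero _
  refine ⟨fun z _ => ⟨?_, f_conj n β z⟩, ?_⟩
  · rw [Complex.exp_neg, hrot, f_add_pi_mul_of_pow_eq_neg_one hζ, inv_mul_cancel_left₀ hIζ]
  · calc f n (β + π) '' Metric.ball 0 1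
        = f n (β + π) '' ((ζ * ·) '' Metric.ball 0 1) := by
          rw [image_mul_ball_zero_of_norm_eq_one (norm_exp_I_mul_ofReal _)]
      _ = (fun z => I * ζ * f n β z) '' Metric.ball 0 1 := by
          rw [Set.image_image]; simp_rw [f_add_pi_mul_of_pow_eq_neg_one hζ]
      _ = _ := by rw [hrot, Set.image_image]
end

section
/- Let η = π/(2n) − π/4 and γ = −π/(2n). Then for every complex z with |z| ≤ 1, e^{iη} f_{π/2}(e^{iγ} · conj z) = conj(e^{iη} f_{π/2}(e^{iγ} z)). Hence if z and z′ are reflections of one another in the line arg z = γ, then f_{π/2}(z) and f_{π/2}(z′) are reflections of one another in the line arg z = −η, so the image f_{π/2}(U) has reflectional symmetry. -/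
open Real

/-! Write `ζ = e^{-iπ/(2n)}`. The series `h_n` and `g_n` have real coefficients, and their
exponents are tuned to `ζ`: with `α = e^{iπ/(2n)}` and `κ = e^{i(π/2 - π/(2n))}` one has
`α ζ^{2mn+1} = (-1)^m = κ ζ^{2mn+n-1}`. So every term of `α h_n(ζ z̄)` is the conjugate of the
corresponding term of `α h_n(ζ z)`, and likewise for `κ g_n`. The rotation `e^{iη}` turns the phases
`e^{±iπ/4}` of `f_{π/2}` into exactly `α` and `κ̄`, which gives the functional
equation; the symmetry of the image follows because the reflection in the line
`arg z = -π/(2n)` preserves the unit disc. -/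

open ComplexConjugate

lemma mul_tsum_conj_eq_conj_mul_tsum (a : ℕ → ℝ) (k : ℕ → ℕ) {α ζ : ℂ}
    (hreal : ∀ m, conj (α * ζ ^ k m) = α * ζ ^ k m) (z : ℂ) :
    α * ∑' m, (a m : ℂ) * (ζ * conj z) ^ k m = conj (α * ∑' m, (a m : ℂ) * (ζ * z) ^ k m) := by
  rw [map_mul, Complex.conj_tsum, ← tsum_mul_left, ← tsum_mul_left]
  refine tsum_congr fun m => ?_
  have := hreal m
  simp only [map_mul, map_pow, Complex.conj_ofReal] at this ⊢
  linear_combination (a m : ℂ) * conj z ^ k m * this.symm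

lemma exp_add_nat_mul_eq_neg_one_pow {a b : ℂ} {k m : ℕ} (h : a + k * b = m * -(π * Complex.I)) :
    Complex.exp a * Complex.exp b ^ k = (-1) ^ m := by
  rw [← Complex.exp_nat_mul, ← Complex.exp_add, h, Complex.exp_nat_mul, Complex.exp_neg,
    Complex.exp_pi_mul_I]
  norm_num

lemma conj_exp_add_nat_mul {a b : ℂ} {k m : ℕ} (h : a + k * b = m * -(π * Complex.I)) :
    conj (Complex.exp a * Complex.exp b ^ k) = Complex.exp a * Complex.exp b ^ k := by
  simp [exp_add_nat_mul_eq_neg_one_pow h]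

lemma hh_reflect (n : ℕ) (hn : n ≠ 0) (z : ℂ) :
    Complex.exp (Complex.I * ((π / (2 * n) : ℝ) : ℂ)) *
        hh n (Complex.exp (Complex.I * ((-(π / (2 * n)) : ℝ) : ℂ)) * conj z)
      = conj (Complex.exp (Complex.I * ((π / (2 * n) : ℝ) : ℂ)) *
        hh n (Complex.exp (Complex.I * ((-(π / (2 * n)) : ℝ) : ℂ)) * z)) := by
  refine mul_tsum_conj_eq_conj_mul_tsum (c n) (fun m => 2 * m * n + 1) (fun m => ?_) z
  apply conj_exp_add_nat_mul (m := m)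
  have : (n : ℂ) ≠ 0 := Nat.cast_ne_zero.mpr hn
  push_cast
  field_simp
  ring

lemma gg_reflect (n : ℕ) (hn : 1 ≤ n) (z : ℂ) :
    Complex.exp (Complex.I * ((π / 2 - π / (2 * n) : ℝ) : ℂ)) *
        gg n (Complex.exp (Complex.I * ((-(π / (2 * n)) : ℝ) : ℂ)) * conj z)
      = conj (Complex.exp (Complex.I * ((π / 2 - π / (2 * n) : ℝ) : ℂ)) *
        gg n (Complex.exp (Complex.I * ((-(π / (2 * n)) : ℝ) : ℂ)) * z)) := by
  have hseries : Complex.exp (Complex.I * ((π / 2 - π / (2 * n) : ℝ) : ℂ)) *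
        ∑' m, (d n m : ℂ) * (Complex.exp (Complex.I * ((-(π / (2 * n)) : ℝ) : ℂ)) * conj z) ^
          (2 * m * n + n - 1)
      = conj (Complex.exp (Complex.I * ((π / 2 - π / (2 * n) : ℝ) : ℂ)) *
        ∑' m, (d n m : ℂ) * (Complex.exp (Complex.I * ((-(π / (2 * n)) : ℝ) : ℂ)) * z) ^
          (2 * m * n + n - 1)) := by
    refine mul_tsum_conj_eq_conj_mul_tsum (d n) (fun m => 2 * m * n + n - 1) (fun m => ?_) z
    apply conj_exp_add_nat_mul (m := m)
    have : (n : ℂ) ≠ 0 := Nat.cast_ne_zero.mpr (by omega)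
    rw [Nat.cast_sub (by nlinarith)]
    push_cast
    field_simp
    ring
  have hscalar : conj (1 / ((n : ℂ) - 1)) = 1 / ((n : ℂ) - 1) := by simp
  rw [gg, gg, mul_left_comm, hseries, mul_left_comm, map_mul _ (1 / _), hscalar]

lemma f_half_pi_reflect (n : ℕ) (hn : 1 ≤ n) (z : ℂ) :
    Complex.exp (Complex.I * ((π / (2 * n) - π / 4 : ℝ) : ℂ)) *
        f n (π / 2) (Complex.exp (Complex.I * ((-(π / (2 * n)) : ℝ) : ℂ)) * conj z)
      = conj (Complex.exp (Complex.I * ((π / (2 * n) - π / 4 : ℝ) : ℂ)) *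
        f n (π / 2) (Complex.exp (Complex.I * ((-(π / (2 * n)) : ℝ) : ℂ)) * z)) := by
  set ω := Complex.exp (Complex.I * ((π / (2 * n) - π / 4 : ℝ) : ℂ))
  set ζ := Complex.exp (Complex.I * ((-(π / (2 * n)) : ℝ) : ℂ))
  set κ := Complex.exp (Complex.I * ((π / 2 - π / (2 * n) : ℝ) : ℂ))
  have hplus : ω * Complex.exp (Complex.I * ((π / 2 : ℝ) : ℂ) / 2) =
      Complex.exp (Complex.I * ((π / (2 * n) : ℝ) : ℂ)) := by
    rw [← Complex.exp_add]; congr 1; push_cast; ring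
  have hminus : ω * Complex.exp (-(Complex.I * ((π / 2 : ℝ) : ℂ) / 2)) = conj κ := by
    rw [← Complex.exp_add, ← Complex.exp_conj]; congr 1; simp [map_ofNat]; ring
  calc ω * f n (π / 2) (ζ * conj z)
      = Complex.exp (Complex.I * ((π / (2 * n) : ℝ) : ℂ)) * hh n (ζ * conj z)
          + conj (κ * gg n (ζ * conj z)) := by
        rw [f, mul_add, ← mul_assoc, ← mul_assoc, hplus, hminus, map_mul]
    _ = conj (Complex.exp (Complex.I * ((π / (2 * n) : ℝ) : ℂ)) * hh n (ζ * z))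
          + conj (conj (κ * gg n (ζ * z))) := by
        rw [hh_reflect n (by omega), gg_reflect n hn]
    _ = conj (ω * f n (π / 2) (ζ * z)) := by
        rw [f, mul_add, ← mul_assoc, ← mul_assoc, hplus, hminus, map_add,
          map_mul (starRingEnd ℂ) κ]

lemma conj_image_ball_eq_of_reflect {F : ℂ → ℂ} {ζ : ℂ} (hζ : ‖ζ‖ = 1)
    (h : ∀ z, F (ζ * conj z) = conj (F (ζ * z))) :
    conj '' (F '' Metric.ball 0 1) = F '' Metric.ball 0 1 := by
  suffices hsub : conj '' (F '' Metric.ball 0 1) ⊆ F '' Metric.ball 0 1 from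
    hsub.antisymm fun w hw => ⟨conj w, hsub (Set.mem_image_of_mem _ hw), Complex.conj_conj w⟩
  rintro _ ⟨_, ⟨v, hv, rfl⟩, rfl⟩
  have hζ0 : ζ ≠ 0 := norm_ne_zero_iff.mp (hζ ▸ one_ne_zero)
  refine ⟨ζ * conj (ζ⁻¹ * v), ?_, ?_⟩
  · simpa [norm_mul, hζ] using hv
  · rw [h, mul_inv_cancel_left₀ hζ0]

theorem stmt_9 (n : ℕ) (hn : 3 ≤ n) :
    (∀ z : ℂ, ‖z‖ ≤ 1 →
      Complex.exp (Complex.I * ((π / (2 * n) - π / 4 : ℝ) : ℂ)) *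
          f n (π / 2) (Complex.exp (Complex.I * ((-(π / (2 * n)) : ℝ) : ℂ)) * (starRingEnd ℂ) z)
        = (starRingEnd ℂ)
            (Complex.exp (Complex.I * ((π / (2 * n) - π / 4 : ℝ) : ℂ)) *
              f n (π / 2) (Complex.exp (Complex.I * ((-(π / (2 * n)) : ℝ) : ℂ)) * z))) ∧
    (starRingEnd ℂ) ''
        ((fun w => Complex.exp (Complex.I * ((π / (2 * n) - π / 4 : ℝ) : ℂ)) * w) ''
          (f n (π / 2) '' Metric.ball 0 1))
      = (fun w => Complex.exp (Complex.I * ((π / (2 * n) - π / 4 : ℝ) : ℂ)) * w) ''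
          (f n (π / 2) '' Metric.ball 0 1) := by
  have hreflect := f_half_pi_reflect n (by omega)
  have hζ : ‖Complex.exp (Complex.I * ((-(π / (2 * n)) : ℝ) : ℂ))‖ = 1 := by
    rw [mul_comm]
    exact Complex.norm_exp_ofReal_mul_I _
  refine ⟨fun z _ => hreflect z, ?_⟩
  simpa only [Set.image_image] using conj_image_ball_eq_of_reflect
    (F := fun w => Complex.exp (Complex.I * ((π / (2 * n) - π / 4 : ℝ) : ℂ)) * f n (π / 2) w)
    hζ hreflect
end
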